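/- If a real number u ∈ (0, π) and θ ∈ (0, π/2), then the angle of the planar curve u ↦ (1, 0) − u cos θ (sin θ, −cos θ) is nonnegative and strictly less than u; in particular this vector never equals a positive or negative multiple of (cos u, sin u) for u ∈ (0, π). -/

import Mathlib

/-!
With `p = sin (u/2)`, `q = cos (u/2)`, the cross product of `(cos u, sin u)` with
`v(u) = (1 - u cos θ sin θ, u cos² θ)` equals
`u (q sin θ - p cos θ)² + 2q (p - (u/2) q)`, which is positive because `tan (u/2) > u/2`.
Since `‖v‖ sin (u - arg v)` equals that cross product and `arg v ∈ [0, π]`, this forces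
`arg v < u`, and it rules out `v` being parallel to `(cos u, sin u)`.
-/

open Real

theorem Real.mul_cos_lt_sin {x : ℝ} (hx₀ : 0 < x) (hx : x < π) : x * cos x < sin x := by
  have hsin : 0 < sin x := sin_pos_of_pos_of_lt_pi hx₀ hx
  rcases lt_or_ge x (π / 2) with hx' | hx'
  · have hcos : 0 < cos x := cos_pos_of_mem_Ioo ⟨by linarith, hx'⟩
    have := lt_tan hx₀ hx'
    rwa [tan_eq_sin_div_cos, lt_div_iff₀ hcos] at this
  · have hcos : cos x ≤ 0 := cos_nonpos_of_pi_div_two_le_of_le hx' (by linarith)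
    nlinarith

theorem Complex.norm_mul_sin_sub_arg (z : ℂ) (u : ℝ) :
    ‖z‖ * Real.sin (u - arg z) = Real.sin u * z.re - Real.cos u * z.im := by
  rw [Real.sin_sub, ← norm_mul_cos_arg z, ← norm_mul_sin_arg z]
  ring

theorem Complex.arg_lt_of_sin_mul_re_sub_cos_mul_im_pos {z : ℂ} {u : ℝ} (hu : 0 ≤ u)
    (h : 0 < Real.sin u * z.re - Real.cos u * z.im) : arg z < u := by
  by_contra! hle
  have hsin : Real.sin (u - arg z) ≤ 0 :=
    sin_nonpos_of_nonpos_of_neg_pi_le (by linarith) (by linarith [arg_le_pi z])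
  have := mul_nonpos_of_nonneg_of_nonpos (norm_nonneg z) hsin
  rw [norm_mul_sin_sub_arg] at this
  linarith

theorem sin_mul_sub_cos_mul_grushin_pos (θ : ℝ) {u : ℝ} (hu : u ∈ Set.Ioo 0 π) :
    0 < sin u * (1 - u * cos θ * sin θ) - cos u * (u * cos θ ^ 2) := by
  obtain ⟨hu₀, hu⟩ := hu
  set p := sin (u / 2)
  set q := cos (u / 2)
  have hq : 0 < q := cos_pos_of_mem_Ioo ⟨by linarith, by linarith⟩
  have htan : u / 2 * q < p := mul_cos_lt_sin (by linarith) (by linarith)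
  have hsin : sin u = 2 * p * q := by rw [← sin_two_mul, mul_div_cancel₀ u two_ne_zero]
  have hcos : cos u = q ^ 2 - p ^ 2 := by
    rw [← cos_two_mul', mul_div_cancel₀ u two_ne_zero]
  have hsum : sin u * (1 - u * cos θ * sin θ) - cos u * (u * cos θ ^ 2)
      = u * (sin θ * q - cos θ * p) ^ 2 + 2 * q * (p - u / 2 * q) := by
    rw [hsin, hcos]
    linear_combination (-u * q ^ 2) * sin_sq_add_cos_sq θ
  rw [hsum]
  have := mul_pos hq (sub_pos.mpr htan)
  positivity

theorem grushin_angle_estimate_general (θ u : ℝ)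
    (hu : u ∈ Set.Ioo 0 Real.pi) :
    (0 ≤ Complex.arg ((1 - u * Real.cos θ * Real.sin θ) +
        (u * (Real.cos θ) ^ 2) * Complex.I) ∧
      Complex.arg ((1 - u * Real.cos θ * Real.sin θ) +
        (u * (Real.cos θ) ^ 2) * Complex.I) < u) ∧
    ∀ c : ℝ, c ≠ 0 →
      (1 - u * Real.cos θ * Real.sin θ, u * (Real.cos θ) ^ 2) ≠
        (c * Real.cos u, c * Real.sin u) := by
  have hcross := sin_mul_sub_cos_mul_grushin_pos θ hu
  set z : ℂ := (1 - u * Real.cos θ * Real.sin θ) + (u * (Real.cos θ) ^ 2) * Complex.I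
  obtain ⟨hre, him⟩ : z.re = 1 - u * cos θ * sin θ ∧ z.im = u * cos θ ^ 2 := by
    constructor <;> simp [z, ← Complex.ofReal_pow, -Complex.ofReal_cos, -Complex.ofReal_sin]
  refine ⟨⟨Complex.arg_nonneg_iff.mpr (him ▸ mul_nonneg hu.1.le (sq_nonneg _)), ?_⟩, ?_⟩
  · exact Complex.arg_lt_of_sin_mul_re_sub_cos_mul_im_pos hu.1.le (hre ▸ him ▸ hcross)
  · rintro c - hpar
    obtain ⟨hx, hy⟩ := Prod.mk.inj hpar
    rw [hx, hy] at hcross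
    exact hcross.ne' (by ring)

/-- For u ∈ (0,π) and θ ∈ (0,π/2), the angle (argument) of the planar vector
    v(u) = (1 − u cos θ sin θ, u cos²θ) = (1,0) − u cos θ (sin θ, −cos θ)
    is nonnegative and strictly less than u; in particular v(u) is never a nonzero
    multiple of (cos u, sin u). -/
theorem grushin_angle_estimate (θ u : ℝ)
    (hθ : θ ∈ Set.Ioo 0 (Real.pi / 2)) (hu : u ∈ Set.Ioo 0 Real.pi) :
    (0 ≤ Complex.arg ((1 - u * Real.cos θ * Real.sin θ) +
        (u * (Real.cos θ) ^ 2) * Complex.I) ∧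
      Complex.arg ((1 - u * Real.cos θ * Real.sin θ) +
        (u * (Real.cos θ) ^ 2) * Complex.I) < u) ∧
    ∀ c : ℝ, c ≠ 0 →
      (1 - u * Real.cos θ * Real.sin θ, u * (Real.cos θ) ^ 2) ≠
        (c * Real.cos u, c * Real.sin u) :=
  grushin_angle_estimate_general θ u hu
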